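/- arXiv:1704.00437 — 7 statements merged into one kernel-verified Lean document; each statement's English description precedes it below -/
import Mathlib

section
/- Let X be a Banach space and T a bounded linear operator on X with spectral radius r(T) ≤ 1 and σ(T) ∩ 𝕋 ⊆ {1}. If ‖(λ - T)⁻¹‖ = O(|λ - 1|^{-α}) as λ → 1 with |λ| > 1 for some α ≥ 1, then ‖(e^{iθ} - T)⁻¹‖ = O(|θ|^{-α}) as θ → 0. -/
/-!
Since `r(T) ≤ 1`, every `z = (1 + s) e^{iθ}` with `s > 0` lies in the resolvent set, and as
`|z - 1| ≥ (2/π)|θ|` the hypothesis gives `‖R(z,T)‖ = O(|θ|^{-α})` once `s ≤ |θ|`. Taking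
`s ≍ |θ|^α` so small that `s ‖R(z,T)‖ ≤ 1/2`, the factorisation
`e^{iθ} - T = (z - T)(1 - (z - e^{iθ}) R(z,T))` and the Neumann series give
`‖R(e^{iθ},T)‖ ≤ 2 ‖R(z,T)‖`.
-/

open Complex

section InversePerturbation

variable {R : Type*} [NormedRing R] [HasSummableGeomSeries R]

theorem norm_inverse_one_sub_le (h1 : ‖(1 : R)‖ ≤ 1) {t : R} (ht : ‖t‖ < 1) :
    ‖Ring.inverse (1 - t)‖ ≤ (1 - ‖t‖)⁻¹ := by
  rw [← geom_series_eq_inverse t ht]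
  linarith [tsum_geometric_le_of_norm_lt_one t ht]

theorem norm_inverse_le_of_norm_inv_mul_norm_sub_le (h1 : ‖(1 : R)‖ ≤ 1) (u : Rˣ) {b : R}
    {ε : ℝ} (hε : ε < 1) (h : ‖(↑u⁻¹ : R)‖ * ‖b - u‖ ≤ ε) :
    ‖Ring.inverse b‖ ≤ (1 - ε)⁻¹ * ‖(↑u⁻¹ : R)‖ := by
  set t : R := ↑u⁻¹ * (↑u - b)
  have ht : ‖t‖ ≤ ε := norm_mul_le _ _ |>.trans (by rwa [norm_sub_rev])
  have ht1 : ‖t‖ < 1 := ht.trans_lt hε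
  have hb : b = ↑(u * Units.oneSub t ht1) := by
    simp [t, mul_sub, ← mul_assoc]
  calc ‖Ring.inverse b‖ = ‖Ring.inverse (1 - t) * ↑u⁻¹‖ := by
        rw [hb, Ring.inverse_unit, mul_inv_rev, Units.val_mul, NormedRing.inverse_one_sub]
    _ ≤ (1 - ‖t‖)⁻¹ * ‖(↑u⁻¹ : R)‖ :=
        norm_mul_le _ _ |>.trans (by gcongr; exact norm_inverse_one_sub_le h1 ht1)
    _ ≤ (1 - ε)⁻¹ * ‖(↑u⁻¹ : R)‖ := by gcongr

end InversePerturbation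

theorem norm_one_add_mul_of_norm_eq_one {μ : ℂ} (hμ : ‖μ‖ = 1) {s : ℝ} (hs : 0 ≤ s) :
    ‖(1 + s) * μ‖ = 1 + s := by
  rw [norm_mul, hμ, mul_one, ← ofReal_one, ← ofReal_add, norm_real,
    Real.norm_of_nonneg (by positivity)]

theorem two_div_pi_mul_abs_le_norm_one_add_mul_exp_sub_one {s θ : ℝ} (hs : 0 ≤ s)
    (hθ : |θ| ≤ Real.pi / 2) : 2 / Real.pi * |θ| ≤ ‖(1 + s) * exp (θ * I) - 1‖ :=
  calc 2 / Real.pi * |θ| ≤ |Real.sin θ| := Real.mul_abs_le_abs_sin hθ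
    _ ≤ (1 + s) * |Real.sin θ| := le_mul_of_one_le_left (abs_nonneg _) (by linarith)
    _ = |((1 + s) * exp (θ * I) - 1).im| := by
        simp [exp_ofReal_mul_I_re, exp_ofReal_mul_I_im, abs_mul,
          abs_of_nonneg (by linarith : 0 ≤ 1 + s)]
    _ ≤ _ := abs_im_le_norm _

theorem norm_one_add_mul_exp_sub_one_le {s θ : ℝ} (hs : 0 ≤ s) :
    ‖(1 + s) * exp (θ * I) - 1‖ ≤ s + |θ| :=
  calc ‖(1 + s) * exp (θ * I) - 1‖ = ‖s * exp (θ * I) + (exp (I * θ) - 1)‖ := by ring_nf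
    _ ≤ s + |θ| := by
        refine norm_add_le_of_le ?_ Real.norm_exp_I_mul_ofReal_sub_one_le
        rw [norm_mul, norm_exp_ofReal_mul_I, norm_real, Real.norm_of_nonneg hs, mul_one]

section Resolvent

variable {A : Type*} [NormedRing A] [HasSummableGeomSeries A]

theorem norm_resolvent_le_of_norm_resolvent_mul_norm_sub_le {𝕜 : Type*} [NormedField 𝕜]
    [NormedAlgebra 𝕜 A] (h1 : ‖(1 : A)‖ ≤ 1) {a : A} {z w : 𝕜} (hz : z ∈ resolventSet 𝕜 a)
    {ε : ℝ} (hε : ε < 1) (h : ‖resolvent a z‖ * ‖w - z‖ ≤ ε) :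
    ‖resolvent a w‖ ≤ (1 - ε)⁻¹ * ‖resolvent a z‖ := by
  rw [spectrum.resolvent_eq hz] at h ⊢
  refine norm_inverse_le_of_norm_inv_mul_norm_sub_le h1 hz.unit hε (h.trans' ?_)
  gcongr
  rw [IsUnit.unit_spec (spectrum.mem_resolventSet_iff.mp hz), sub_sub_sub_cancel_right,
    ← map_sub, norm_algebraMap]
  exact mul_le_of_le_one_right (norm_nonneg _) h1

theorem norm_resolvent_le_two_mul_of_spectralRadius_le_one [NormedAlgebra ℂ A]
    (h1 : ‖(1 : A)‖ ≤ 1) {a : A} (ha : spectralRadius ℂ a ≤ 1) {μ : ℂ} (hμ : ‖μ‖ = 1)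
    {s : ℝ} (hs : 0 < s) (h : ‖resolvent a ((1 + s) * μ)‖ * s ≤ 1 / 2) :
    ‖resolvent a μ‖ ≤ 2 * ‖resolvent a ((1 + s) * μ)‖ := by
  have hz : (1 + s) * μ ∈ resolventSet ℂ a := by
    refine spectrum.mem_resolventSet_of_spectralRadius_lt (ha.trans_lt ?_)
    rw [ENNReal.one_lt_coe_iff, ← NNReal.coe_lt_coe, coe_nnnorm,
      norm_one_add_mul_of_norm_eq_one hμ hs.le]
    simpa using hs
  have hdist : ‖μ - (1 + s) * μ‖ = s := by
    rw [show μ - (1 + s) * μ = -(s * μ) by ring, norm_neg, norm_mul, hμ, norm_real,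
      Real.norm_of_nonneg hs.le, mul_one]
  refine (norm_resolvent_le_of_norm_resolvent_mul_norm_sub_le h1 hz
    (by norm_num : (1 / 2 : ℝ) < 1) (by rwa [hdist])).trans_eq ?_
  norm_num

end Resolvent

theorem norm_resolvent_one_add_mul_exp_le {A : Type*} [NormedRing A] [NormedAlgebra ℂ A] {a : A}
    {C δ α : ℝ} (hC : 0 ≤ C) (hα : 0 ≤ α)
    (hbound : ∀ z : ℂ, 1 < ‖z‖ → ‖z - 1‖ ≤ δ → ‖resolvent a z‖ ≤ C * ‖z - 1‖ ^ (-α))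
    {θ s : ℝ} (hθ : θ ≠ 0) (hθ1 : |θ| ≤ 1) (hθδ : 2 * |θ| ≤ δ) (hs : 0 < s) (hsθ : s ≤ |θ|) :
    ‖resolvent a ((1 + s) * exp (θ * I))‖ ≤ C * (2 / Real.pi) ^ (-α) * |θ| ^ (-α) := by
  have hθ0 : 0 < |θ| := abs_pos.mpr hθ
  have hfar : 2 / Real.pi * |θ| ≤ ‖(1 + s) * exp (θ * I) - 1‖ :=
    two_div_pi_mul_abs_le_norm_one_add_mul_exp_sub_one hs.le
      (hθ1.trans (by linarith [Real.pi_gt_three]))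
  calc ‖resolvent a ((1 + s) * exp (θ * I))‖ ≤ C * ‖(1 + s) * exp (θ * I) - 1‖ ^ (-α) := by
        refine hbound _ ?_ ((norm_one_add_mul_exp_sub_one_le hs.le).trans ?_)
        · rw [norm_one_add_mul_of_norm_eq_one (norm_exp_ofReal_mul_I θ) hs.le]
          linarith
        · linarith
    _ ≤ C * (2 / Real.pi * |θ|) ^ (-α) :=
        mul_le_mul_of_nonneg_left
          (Real.rpow_le_rpow_of_nonpos (by positivity) hfar (by linarith)) hC
    _ = C * (2 / Real.pi) ^ (-α) * |θ| ^ (-α) := by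
        rw [Real.mul_rpow (by positivity) hθ0.le, mul_assoc]

theorem stmt0_general {X : Type*} [NormedAddCommGroup X] [NormedSpace ℂ X] [CompleteSpace X]
    (T : X →L[ℂ] X)
    (hr : spectralRadius ℂ T ≤ 1)
    (α : ℝ) (hα : 1 ≤ α)
    (hres : ∃ C > (0:ℝ), ∃ δ > (0:ℝ), ∀ lam : ℂ, 1 < ‖lam‖ → ‖lam - 1‖ ≤ δ →
      ‖resolvent T lam‖ ≤ C * ‖lam - 1‖ ^ (-α)) :
    ∃ C > (0:ℝ), ∃ δ > (0:ℝ), ∀ θ : ℝ, θ ≠ 0 → |θ| ≤ δ →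
      ‖resolvent T (Complex.exp (θ * Complex.I))‖ ≤ C * |θ| ^ (-α) := by
  obtain ⟨C, -, δ, hδ, hbound⟩ := hres
  set M := max C 1 * (2 / Real.pi) ^ (-α)
  have hM : 1 ≤ M := one_le_mul_of_one_le_of_one_le (le_max_right _ _)
    (Real.one_le_rpow_of_pos_of_le_one_of_nonpos (by positivity)
      ((div_le_one Real.pi_pos).mpr Real.two_le_pi) (by linarith))
  refine ⟨2 * M, by positivity, min 1 (δ / 2), by positivity, fun θ hθ hθδ => ?_⟩
  have hθ0 : 0 < |θ| := abs_pos.mpr hθ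
  have hθ1 : |θ| ≤ 1 := hθδ.trans (min_le_left _ _)
  -- the radial step size at which the perturbation `‖R(z)‖ * |z - e^{iθ}|` is exactly `1/2`
  set s := |θ| ^ α / (2 * M)
  have hs : 0 < s := by positivity
  have hsθ : s ≤ |θ| :=
    (div_le_self (by positivity) (by linarith)).trans (Real.rpow_le_self_of_le_one hθ0.le hθ1 hα)
  have hRz : ‖resolvent T ((1 + s) * exp (θ * I))‖ ≤ M * |θ| ^ (-α) :=
    norm_resolvent_one_add_mul_exp_le (by positivity) (by linarith)
      (fun z hz hzδ => (hbound z hz hzδ).trans (by gcongr; exact le_max_left _ _))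
      hθ hθ1 (by linarith [min_le_right 1 (δ / 2)]) hs hsθ
  have hM0 : M ≠ 0 := by positivity
  calc ‖resolvent T (exp (θ * I))‖ ≤ 2 * ‖resolvent T ((1 + s) * exp (θ * I))‖ := by
        refine norm_resolvent_le_two_mul_of_spectralRadius_le_one ContinuousLinearMap.norm_id_le hr
          (norm_exp_ofReal_mul_I θ) hs ((mul_le_mul_of_nonneg_right hRz hs.le).trans_eq ?_)
        simp only [s, Real.rpow_neg hθ0.le]
        field_simp
    _ ≤ 2 * M * |θ| ^ (-α) := by linarith

/-- If `T` has spectral radius at most 1, its peripheral spectrum is contained in `{1}`, and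
the resolvent satisfies `‖R(λ,T)‖ = O(|λ-1|^{-α})` as `λ → 1` with `|λ| > 1` for some `α ≥ 1`,
then `‖R(e^{iθ},T)‖ = O(|θ|^{-α})` as `θ → 0`. -/
theorem stmt0 {X : Type*} [NormedAddCommGroup X] [NormedSpace ℂ X] [CompleteSpace X]
    (T : X →L[ℂ] X)
    (hr : spectralRadius ℂ T ≤ 1)
    (hσ : spectrum ℂ T ∩ {z : ℂ | ‖z‖ = 1} ⊆ {1})
    (α : ℝ) (hα : 1 ≤ α)
    (hres : ∃ C > (0:ℝ), ∃ δ > (0:ℝ), ∀ lam : ℂ, 1 < ‖lam‖ → ‖lam - 1‖ ≤ δ →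
      ‖resolvent T lam‖ ≤ C * ‖lam - 1‖ ^ (-α)) :
    ∃ C > (0:ℝ), ∃ δ > (0:ℝ), ∀ θ : ℝ, θ ≠ 0 → |θ| ≤ δ →
      ‖resolvent T (Complex.exp (θ * Complex.I))‖ ≤ C * |θ| ^ (-α) :=
  stmt0_general T hr α hα hres
end

section
/- Let X be a Banach space, T ∈ B(X) power-bounded with σ(T) ∩ 𝕋 ⊆ {1}, and let S be the restriction of T to the closure Z of Ran(I - T). If Ran(I - T) is closed, then the spectral radius of S is strictly less than 1, and consequently there exist C > 0 and r ∈ [0,1) with ‖Tⁿ - P_T‖ ≤ C rⁿ for all n ≥ 0, where P_T is the projection onto Fix T along Z (assuming X = Fix T ⊕ Z). -/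
/-!
Since `Ran(I - T)` is closed it equals `Z`, and `I - T` maps `Z` bijectively onto itself: it is
injective there because `Z ∩ Fix T = 0`, and onto because it kills `Fix T`. For `μ ≠ 1` on the
unit circle, `μ - T` is invertible and commutes with `I - T`, so it also maps `Ran(I - T)`
bijectively onto itself. Hence `σ(S)` misses the unit circle, while power-boundedness puts it in
the closed unit disc, so `r(S) < 1` and Gelfand's formula gives `‖Sⁿ‖ ≤ C rⁿ`. Finally
`Tⁿ - P = Tⁿ (I - P)` because `P` takes values in `Fix T`, and `I - P` takes values in `Z`.
-/

open Filter
open scoped NNReal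

namespace spectrum

variable {A : Type*} [NormedRing A] [NormedAlgebra ℂ A] [CompleteSpace A] {a : A}

lemma norm_le_one_of_pow_bounded (hpb : ∃ M : ℝ, ∀ n : ℕ, ‖a ^ n‖ ≤ M) {k : ℂ}
    (hk : k ∈ spectrum ℂ a) : ‖k‖ ≤ 1 := by
  obtain ⟨M, hM⟩ := hpb
  by_contra! hk1
  obtain ⟨n, hn⟩ := pow_unbounded_of_one_lt (M * ‖(1 : A)‖) hk1
  have hkn : ‖k‖ ^ n ≤ ‖a ^ n‖ * ‖(1 : A)‖ := by
    simpa only [norm_pow] using norm_le_norm_mul_of_mem (pow_mem_pow a n hk)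
  exact hn.not_ge (hkn.trans (mul_le_mul_of_nonneg_right (hM n) (norm_nonneg _)))

lemma spectralRadius_lt_one_of_pow_bounded (hpb : ∃ M : ℝ, ∀ n : ℕ, ‖a ^ n‖ ≤ M)
    (hcirc : ∀ k ∈ spectrum ℂ a, ‖k‖ ≠ 1) : spectralRadius ℂ a < 1 := by
  cases subsingleton_or_nontrivial A
  · simp [SpectralRadius.of_subsingleton]
  · simpa using spectralRadius_lt_of_forall_lt a (r := 1) fun k hk =>
      (norm_le_one_of_pow_bounded hpb hk).lt_of_ne (hcirc k hk)

lemma eventually_norm_pow_le_of_spectralRadius_lt {r : ℝ≥0} (h : spectralRadius ℂ a < r) :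
    ∀ᶠ n : ℕ in atTop, ‖a ^ n‖ ≤ (r : ℝ) ^ n := by
  filter_upwards [(gelfand_formula a).eventually_lt_const h, eventually_ne_atTop 0]
    with n hn hn0
  rw [← ENNReal.coe_rpow_of_nonneg _ (by positivity), ENNReal.coe_lt_coe, one_div,
    NNReal.rpow_inv_lt_iff (by positivity), NNReal.rpow_natCast] at hn
  exact_mod_cast hn.le

lemma exists_norm_pow_le_of_spectralRadius_lt_one (h : spectralRadius ℂ a < 1) :
    ∃ C > (0 : ℝ), ∃ r ∈ Set.Ico (0 : ℝ) 1, ∀ n : ℕ, ‖a ^ n‖ ≤ C * r ^ n := by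
  obtain ⟨r, hr, hr1⟩ := ENNReal.lt_iff_exists_nnreal_btwn.mp h
  have hr0 : (0 : ℝ) < r := by simpa using pos_of_gt hr
  have hbigO : (fun n : ℕ => a ^ n) =O[atTop] fun n => (r : ℝ) ^ n :=
    Asymptotics.IsBigO.of_bound 1 <| by
      simpa [abs_of_pos hr0] using eventually_norm_pow_le_of_spectralRadius_lt hr
  obtain ⟨C, hC⟩ :=
    (Asymptotics.isBigO_nat_atTop_iff fun n h => absurd h (by positivity)).mp hbigO
  refine ⟨max C 1, by positivity, r, ⟨hr0.le, by exact_mod_cast hr1⟩, fun n => ?_⟩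
  calc ‖a ^ n‖ ≤ C * ‖(r : ℝ) ^ n‖ := hC n
    _ ≤ max C 1 * (r : ℝ) ^ n := by
      rw [norm_pow, Real.norm_of_nonneg hr0.le]
      gcongr
      exact le_max_left _ _

end spectrum

lemma LinearMap.bijOn_range_of_isCompl_ker_range {R M : Type*} [Ring R] [AddCommGroup M]
    [Module R M] {f : M →ₗ[R] M} (h : IsCompl (ker f) (range f)) :
    Set.BijOn f (range f) (range f) := by
  refine ⟨fun x _ => mem_range_self f x, fun x hx y hy hxy => ?_, ?_⟩
  · have hker : x - y ∈ ker f := by rw [mem_ker, map_sub, hxy, sub_self]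
    exact sub_eq_zero.mp <| Submodule.disjoint_def.mp h.disjoint _ hker
      (Submodule.sub_mem _ hx hy)
  · rintro _ ⟨x, rfl⟩
    obtain ⟨k, r, hk, hr, rfl⟩ := Submodule.codisjoint_iff_exists_add_eq.mp h.codisjoint x
    exact ⟨r, hr, by rw [map_add, mem_ker.mp hk, zero_add]⟩

lemma Submodule.apply_mem_and_sub_apply_mem_of_isCompl {R M : Type*} [Ring R] [AddCommGroup M]
    [Module R M] {p q : Submodule R M} (h : IsCompl p q) {P : M →ₗ[R] M}
    (hp : ∀ x ∈ p, P x = x) (hq : ∀ x ∈ q, P x = 0) (x : M) :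
    P x ∈ p ∧ x - P x ∈ q := by
  obtain ⟨y, z, hy, hz, rfl⟩ := Submodule.codisjoint_iff_exists_add_eq.mp h.codisjoint x
  rw [map_add, hp y hy, hq z hz, add_zero, add_sub_cancel_left]
  exact ⟨hy, hz⟩

section Restriction

variable {𝕜 X : Type*} [NontriviallyNormedField 𝕜] [NormedAddCommGroup X] [NormedSpace 𝕜 X]
  {T : X →L[𝕜] X} {Z : Submodule 𝕜 X} {S : Z →L[𝕜] Z}

lemma restrict_pow_apply (hS : ∀ z : Z, (S z : X) = T z) (n : ℕ) (z : Z) :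
    ((S ^ n) z : X) = (T ^ n) z := by
  induction n generalizing z with
  | zero => rfl
  | succ n ih =>
    change ((S ^ n) (S z) : X) = (T ^ n) (T z)
    rw [ih, hS]

lemma norm_pow_restrict_le (hS : ∀ z : Z, (S z : X) = T z) (n : ℕ) :
    ‖S ^ n‖ ≤ ‖T ^ n‖ :=
  (S ^ n).opNorm_le_bound (norm_nonneg _) fun z => by
    simpa only [← restrict_pow_apply hS, Submodule.coe_norm] using (T ^ n).le_opNorm z

lemma notMem_spectrum_restrict_of_bijOn [CompleteSpace Z]
    (hS : ∀ z : Z, (S z : X) = T z) {μ : 𝕜}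
    (h : Set.BijOn (algebraMap 𝕜 (X →L[𝕜] X) μ - T) Z Z) : μ ∉ spectrum 𝕜 S := by
  have happ (z : Z) :
      ((algebraMap 𝕜 (Z →L[𝕜] Z) μ - S) z : X) = (algebraMap 𝕜 _ μ - T) z := by
    simp [Algebra.algebraMap_eq_smul_one, hS]
  rw [spectrum.notMem_iff, ContinuousLinearMap.isUnit_iff_bijective]
  refine ⟨fun a b hab => Subtype.ext (h.injOn a.2 b.2 ?_), fun z => ?_⟩
  · rw [← happ, ← happ, hab]
  · obtain ⟨x, hx, hxz⟩ := h.surjOn z.2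
    exact ⟨⟨x, hx⟩, Subtype.ext ((happ _).trans hxz)⟩

lemma bijOn_range_of_isUnit_of_commute {U V : X →L[𝕜] X} (hU : IsUnit U) (hUV : Commute U V) :
    Set.BijOn U (Set.range V) (Set.range V) := by
  set W : X →L[𝕜] X := ↑hU.unit⁻¹
  have hWU (x : X) : W (U x) = x := DFunLike.congr_fun hU.val_inv_mul x
  have hUW (x : X) : U (W x) = x := DFunLike.congr_fun hU.mul_val_inv x
  have hUV_apply (x : X) : U (V x) = V (U x) := DFunLike.congr_fun hUV x
  refine ⟨?_, fun x _ y _ hxy => ?_, ?_⟩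
  · rintro _ ⟨y, rfl⟩
    exact ⟨U y, (hUV_apply y).symm⟩
  · rw [← hWU x, hxy, hWU]
  · rintro _ ⟨y, rfl⟩
    exact ⟨V (W y), ⟨W y, rfl⟩, by rw [hUV_apply, hUW]⟩

lemma spectrum_restrict_range_one_sub_subset [CompleteSpace Z]
    (hZ : Z = LinearMap.range ((1 - T : X →L[𝕜] X) : X →ₗ[𝕜] X))
    (hcompl : IsCompl (LinearMap.ker ((1 - T : X →L[𝕜] X) : X →ₗ[𝕜] X)) Z)
    (hS : ∀ z : Z, (S z : X) = T z) : spectrum 𝕜 S ⊆ spectrum 𝕜 T \ {1} := by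
  subst hZ
  intro μ hμS
  refine ⟨fun hμT => ?_, fun hμ1 => ?_⟩
  · refine notMem_spectrum_restrict_of_bijOn hS (bijOn_range_of_isUnit_of_commute hμT ?_) hμS
    exact (Commute.one_right _).sub_right
      ((Algebra.commute_algebraMap_left μ T).sub_left (Commute.refl T))
  · rw [Set.mem_singleton_iff.mp hμ1] at hμS
    refine notMem_spectrum_restrict_of_bijOn hS ?_ hμS
    rw [map_one]
    exact LinearMap.bijOn_range_of_isCompl_ker_range hcompl

lemma norm_pow_sub_le_norm_pow_restrict_mul (hS : ∀ z : Z, (S z : X) = T z) {P : X →L[𝕜] X}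
    (hPfix : ∀ x, T (P x) = P x) (hPZ : ∀ x, x - P x ∈ Z) (n : ℕ) :
    ‖T ^ n - P‖ ≤ ‖S ^ n‖ * ‖1 - P‖ :=
  (T ^ n - P).opNorm_le_bound (by positivity) fun x => by
    have hfix : (T ^ n) (P x) = P x := by
      rw [FunLike.coe_pow_eq_iterate]
      exact Function.IsFixedPt.iterate (hPfix x) n
    have hrestrict : (T ^ n - P) x = ((S ^ n) ⟨x - P x, hPZ x⟩ : X) := by
      rw [restrict_pow_apply hS, map_sub, hfix, sub_apply]
    calc ‖(T ^ n - P) x‖ ≤ ‖S ^ n‖ * ‖x - P x‖ := by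
          simpa only [hrestrict, Submodule.coe_norm] using (S ^ n).le_opNorm ⟨x - P x, hPZ x⟩
      _ ≤ ‖S ^ n‖ * (‖1 - P‖ * ‖x‖) := by
          gcongr
          exact (1 - P).le_opNorm x
      _ = ‖S ^ n‖ * ‖1 - P‖ * ‖x‖ := by ring

end Restriction

/-- If `T` is power-bounded with peripheral spectrum in `{1}`, `X = Fix T ⊕ Z` with `Z` the
closure of `Ran(I - T)`, `S` is the restriction of `T` to `Z`, and `Ran(I - T)` is closed,
then `r(S) < 1` and `‖Tⁿ - P_T‖ ≤ C rⁿ` for some `C > 0`, `r ∈ [0,1)`. -/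
theorem stmt2 {X : Type*} [NormedAddCommGroup X] [NormedSpace ℂ X] [CompleteSpace X]
    (T : X →L[ℂ] X)
    (hpb : ∃ M : ℝ, ∀ n : ℕ, ‖T ^ n‖ ≤ M)
    (hσ : spectrum ℂ T ∩ {z : ℂ | ‖z‖ = 1} ⊆ {1})
    (Z : Submodule ℂ X) (hZ : Z = (LinearMap.range ((1 - T : X →L[ℂ] X) : X →ₗ[ℂ] X)).topologicalClosure)
    -- `S` is the restriction of `T` to the invariant subspace `Z`
    (S : Z →L[ℂ] Z) (hS : ∀ z : Z, (S z : X) = T z)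
    -- the direct sum decomposition `X = Fix T ⊕ Z` with projection `P` onto `Fix T` along `Z`
    (hcompl : IsCompl (LinearMap.ker ((1 - T : X →L[ℂ] X) : X →ₗ[ℂ] X)) Z)
    (P : X →L[ℂ] X)
    (hP1 : ∀ x ∈ LinearMap.ker ((1 - T : X →L[ℂ] X) : X →ₗ[ℂ] X), P x = x)
    (hP2 : ∀ x ∈ Z, P x = 0)
    -- assumption: `Ran(I - T)` is closed
    (hclosed : IsClosed ((LinearMap.range ((1 - T : X →L[ℂ] X) : X →ₗ[ℂ] X) : Submodule ℂ X) : Set X)) :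
    spectralRadius ℂ S < 1 ∧
    ∃ C > (0:ℝ), ∃ r ∈ Set.Ico (0:ℝ) 1, ∀ n : ℕ, ‖T ^ n - P‖ ≤ C * r ^ n := by
  obtain ⟨M, hM⟩ := hpb
  have hZr : Z = LinearMap.range ((1 - T : X →L[ℂ] X) : X →ₗ[ℂ] X) := by
    rw [hZ, hclosed.submodule_topologicalClosure_eq]
  have : CompleteSpace Z := by
    rw [hZr]
    exact hclosed.completeSpace_coe
  have hcirc (k : ℂ) (hk : k ∈ spectrum ℂ S) : ‖k‖ ≠ 1 := fun hk1 =>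
    have ⟨hkT, hk_ne⟩ := spectrum_restrict_range_one_sub_subset hZr hcompl hS hk
    hk_ne (hσ ⟨hkT, hk1⟩)
  have hSpb : ∃ M : ℝ, ∀ n : ℕ, ‖S ^ n‖ ≤ M :=
    ⟨M, fun n => (norm_pow_restrict_le hS n).trans (hM n)⟩
  -- Without `A := Z →L[ℂ] Z`, unifying the Banach-algebra instances on it times out.
  have hrad : spectralRadius ℂ S < 1 :=
    spectrum.spectralRadius_lt_one_of_pow_bounded (A := Z →L[ℂ] Z) hSpb hcirc
  have hdecay := spectrum.exists_norm_pow_le_of_spectralRadius_lt_one (A := Z →L[ℂ] Z) hrad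
  obtain ⟨C, hC, r, hr, hSr⟩ := hdecay
  have hP (x : X) := Submodule.apply_mem_and_sub_apply_mem_of_isCompl hcompl
    (P := (P : X →ₗ[ℂ] X)) hP1 hP2 x
  have hPfix (x : X) : T (P x) = P x :=
    (sub_eq_zero.mp (LinearMap.mem_ker.mp (hP x).1)).symm
  refine ⟨hrad, C * (‖1 - P‖ + 1), by positivity, r, hr, fun n => ?_⟩
  calc ‖T ^ n - P‖ ≤ ‖S ^ n‖ * ‖1 - P‖ :=
        norm_pow_sub_le_norm_pow_restrict_mul hS hPfix (fun x => (hP x).2) n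
    _ ≤ C * r ^ n * (‖1 - P‖ + 1) :=
        mul_le_mul (hSr n) (by linarith) (norm_nonneg _) (mul_nonneg hC.le (pow_nonneg hr.1 n))
    _ = C * (‖1 - P‖ + 1) * r ^ n := by ring
end

section
/- Let Ω ⊆ ℂ be a nonempty closed set contained in the closed unit disc, which is a generalised Stolz domain with parameter α ≥ 1, i.e. there exist c, ε > 0 with 1 - |λ| ≥ c|λ - 1|^α for all λ ∈ Ω with |λ - 1| ≤ ε. Then there exists a constant c' > 0 such that dist(e^{iθ}, Ω) ≥ c'|θ|^α for all θ with 0 < |θ| ≤ π. -/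
open Real

/-- Jordan's inequality on the unit circle. -/
theorem two_div_pi_mul_abs_le_norm_exp_mul_I_sub_one {θ : ℝ} (hθ : |θ| ≤ π) :
    2 / π * |θ| ≤ ‖Complex.exp (θ * Complex.I) - 1‖ := by
  have hsin : 2 / π * |θ / 2| ≤ |sin (θ / 2)| :=
    mul_abs_le_abs_sin (by rw [abs_div, abs_two]; linarith)
  rw [mul_comm (θ : ℂ), Complex.norm_exp_I_mul_ofReal_sub_one, norm_mul, Real.norm_eq_abs,
    Real.norm_eq_abs, abs_two]
  rw [abs_div, abs_two] at hsin
  linarith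

theorem one_sub_norm_le_norm_sub {w : ℂ} (hw : ‖w‖ = 1) (z : ℂ) : 1 - ‖z‖ ≤ ‖w - z‖ :=
  hw ▸ norm_sub_norm_le w z

theorem exists_pos_le_one_sub_norm {Ω : Set ℂ} (hcl : IsClosed Ω)
    (hΩ : Ω ⊆ {z : ℂ | ‖z‖ < 1} ∪ {1}) {ε : ℝ} (hε : 0 < ε) :
    ∃ δ > (0 : ℝ), ∀ z ∈ Ω, ε ≤ ‖z - 1‖ → δ ≤ 1 - ‖z‖ := by
  have hsub : Ω ∩ {z | ε ≤ ‖z - 1‖} ⊆ Metric.ball 0 1 := by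
    rintro z ⟨hz, hzε⟩
    rcases hΩ hz with hlt | rfl
    · simpa using hlt
    · simp at hzε; linarith
  obtain ⟨r, hr1, hr⟩ := exists_lt_subset_ball
    (hcl.inter (isClosed_le continuous_const (continuous_sub_right 1).norm)) hsub
  refine ⟨1 - r, by linarith, fun z hz hzε => ?_⟩
  have := hr ⟨hz, hzε⟩
  rw [mem_ball_zero_iff] at this
  linarith

/-- Applied with `w = e^{iθ}` and `t = |θ| / π`. The three cases: `z` is far from `1` (uniform
gap `δ`), in the Stolz region at distance `≥ t` from `1` (Stolz bound), or within `t` of `1`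
(then `w` is at distance `≥ t` from `z`, and `t ^ α ≤ t`). -/
theorem mul_rpow_le_norm_sub {Ω : Set ℂ} {α c ε δ m : ℝ} (hα : 1 ≤ α)
    (hstolz : ∀ z ∈ Ω, ‖z - 1‖ ≤ ε → c * ‖z - 1‖ ^ α ≤ 1 - ‖z‖)
    (hδ : ∀ z ∈ Ω, ε ≤ ‖z - 1‖ → δ ≤ 1 - ‖z‖)
    (hm0 : 0 ≤ m) (hmc : m ≤ c) (hm1 : m ≤ 1) (hmδ : m ≤ δ)
    {w : ℂ} (hw : ‖w‖ = 1) {t : ℝ} (ht0 : 0 ≤ t) (ht1 : t ≤ 1) (hwt : 2 * t ≤ ‖w - 1‖)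
    {z : ℂ} (hz : z ∈ Ω) :
    m * t ^ α ≤ ‖w - z‖ := by
  have hα0 : 0 ≤ α := by linarith
  have htα0 : 0 ≤ t ^ α := rpow_nonneg ht0 α
  have hgap := one_sub_norm_le_norm_sub hw z
  rcases le_total ε ‖z - 1‖ with hfar | hnear
  · calc m * t ^ α ≤ δ * 1 :=
          mul_le_mul hmδ (rpow_le_one ht0 ht1 hα0) htα0 (hm0.trans hmδ)
      _ ≤ ‖w - z‖ := by linarith [hδ z hz hfar]
  rcases le_total t ‖z - 1‖ with htz | hzt
  · calc m * t ^ α ≤ c * ‖z - 1‖ ^ α :=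
          mul_le_mul hmc (rpow_le_rpow ht0 htz hα0) htα0 (hm0.trans hmc)
      _ ≤ ‖w - z‖ := (hstolz z hz hnear).trans hgap
  · have hw1 : ‖w - 1‖ - ‖z - 1‖ ≤ ‖w - z‖ := by
      simpa using norm_sub_norm_le (w - 1) (z - 1)
    calc m * t ^ α ≤ 1 * t := by
          gcongr
          exact rpow_le_self_of_le_one ht0 ht1 hα
      _ ≤ ‖w - z‖ := by linarith

theorem stmt4_general (Ω : Set ℂ) (hne : Ω.Nonempty) (hcl : IsClosed Ω)
    (hΩ : Ω ⊆ {z : ℂ | ‖z‖ < 1} ∪ {1})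
    (α : ℝ) (hα : 1 ≤ α) (c : ℝ) (hc : 0 < c) (ε : ℝ) (hε : 0 < ε)
    (hstolz : ∀ z ∈ Ω, ‖z - 1‖ ≤ ε → c * ‖z - 1‖ ^ α ≤ 1 - ‖z‖) :
    ∃ c' > (0:ℝ), ∀ θ : ℝ, 0 < |θ| → |θ| ≤ π →
      c' * |θ| ^ α ≤ Metric.infDist (Complex.exp (θ * Complex.I)) Ω := by
  obtain ⟨δ, hδ0, hδ⟩ := exists_pos_le_one_sub_norm hcl hΩ hε
  refine ⟨min c (min 1 δ) / π ^ α, by positivity, fun θ _ hθπ => ?_⟩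
  have hw : ‖Complex.exp (θ * Complex.I)‖ = 1 := Complex.norm_exp_ofReal_mul_I θ
  have hwt : 2 * (|θ| / π) ≤ ‖Complex.exp (θ * Complex.I) - 1‖ := by
    have := two_div_pi_mul_abs_le_norm_exp_mul_I_sub_one hθπ
    rwa [div_mul_eq_mul_div, mul_div_assoc] at this
  have hrescale : min c (min 1 δ) / π ^ α * |θ| ^ α = min c (min 1 δ) * (|θ| / π) ^ α := by
    rw [div_rpow (abs_nonneg θ) pi_pos.le]; ring
  rw [hrescale, Metric.le_infDist hne]
  intro z hz
  rw [dist_eq_norm]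
  exact mul_rpow_le_norm_sub hα hstolz hδ (by positivity) (min_le_left _ _)
    ((min_le_right _ _).trans (min_le_left _ _)) ((min_le_right _ _).trans (min_le_right _ _))
    hw (by positivity) ((div_le_one pi_pos).mpr hθπ) hwt hz

/-- If `Ω ⊆ 𝔻 ∪ {1}` is a nonempty closed subset of the closed unit disc which is a generalised
Stolz domain with parameter `α ≥ 1`, then `dist(e^{iθ}, Ω) ≥ c'|θ|^α` for `0 < |θ| ≤ π`. -/
theorem stmt4 (Ω : Set ℂ) (hne : Ω.Nonempty) (hcl : IsClosed Ω)
    (hdisc : Ω ⊆ {z : ℂ | ‖z‖ ≤ 1})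
    (hΩ : Ω ⊆ {z : ℂ | ‖z‖ < 1} ∪ {1})
    (α : ℝ) (hα : 1 ≤ α) (c : ℝ) (hc : 0 < c) (ε : ℝ) (hε : 0 < ε)
    (hstolz : ∀ z ∈ Ω, ‖z - 1‖ ≤ ε → c * ‖z - 1‖ ^ α ≤ 1 - ‖z‖) :
    ∃ c' > (0:ℝ), ∀ θ : ℝ, 0 < |θ| → |θ| ≤ π →
      c' * |θ| ^ α ≤ Metric.infDist (Complex.exp (θ * Complex.I)) Ω :=
  stmt4_general Ω hne hcl hΩ α hα c hc ε hε hstolz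
end

section
/- Let X be a q-uniformly convex Banach space (q ≥ 2) and T = P_N ⋯ P_1 a product of N projections each of norm at most 1. Then there exists C > 0 such that ‖x - Tx‖ ≤ C(1 - ‖Tx‖)^{1/q^N} for all x ∈ X with ‖x‖ = 1. -/
/-- In a `q`-uniformly convex Banach space (`q ≥ 2`), if `T = P_N ⋯ P_1` is a product of `N`
orthoprojections then there is `C > 0` with `‖x - Tx‖ ≤ C(1 - ‖Tx‖)^{1/q^N}` for all unit
vectors `x`. -/
theorem stmt11 {X : Type*} [NormedAddCommGroup X] [NormedSpace ℂ X]
    (q : ℝ) (hq : 2 ≤ q) (c : ℝ) (hc : 0 < c)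
    -- `X` is `q`-uniformly convex: `δ_X(ε) ≥ cε^q`
    (huc : ∀ x y : X, ‖x‖ ≤ 1 → ‖y‖ ≤ 1 → c * ‖x - y‖ ^ q ≤ 1 - ‖x + y‖ / 2)
    (N : ℕ) (hN : 1 ≤ N) (P : Fin N → (X →L[ℂ] X))
    (hidem : ∀ k, P k ∘L P k = P k) (hnorm : ∀ k, ‖P k‖ ≤ 1)
    -- `T = P_N ⋯ P_1` (so `P 0` is applied first)
    (T : X →L[ℂ] X) (hT : T = (List.ofFn P).reverse.prod) :
    ∃ C > (0:ℝ), ∀ x : X, ‖x‖ = 1 → ‖x - T x‖ ≤ C * (1 - ‖T x‖) ^ (1 / q ^ N) := by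
  have hq0 : (0:ℝ) < q := by linarith
  have hq0' : q ≠ 0 := ne_of_gt hq0
  have hcinv : (0:ℝ) < c ^ (-(1/q)) := Real.rpow_pos_of_pos hc _
  -- single-step lemma
  have step : ∀ (A : X →L[ℂ] X), A ∘L A = A → ‖A‖ ≤ 1 → ∀ y : X, ‖y‖ ≤ 1 →
      ‖y - A y‖ ≤ c ^ (-(1/q)) * (1 - ‖A y‖) ^ (1/q) := by
    intro A hidA hnA y hy
    have hAy : ‖A y‖ ≤ ‖y‖ := by
      calc ‖A y‖ ≤ ‖A‖ * ‖y‖ := A.le_opNorm y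
        _ ≤ 1 * ‖y‖ := by gcongr
        _ = ‖y‖ := one_mul _
    have hAy1 : ‖A y‖ ≤ 1 := hAy.trans hy
    have hmid : 2 * ‖A y‖ ≤ ‖y + A y‖ := by
      have h1 : A (y + A y) = A y + A y := by
        have := congrArg (fun f : X →L[ℂ] X => f y) hidA
        simp only [ContinuousLinearMap.comp_apply] at this
        simp [map_add, this]
      have h2 : ‖A (y + A y)‖ ≤ ‖y + A y‖ := by
        calc ‖A (y + A y)‖ ≤ ‖A‖ * ‖y + A y‖ := A.le_opNorm _
          _ ≤ 1 * ‖y + A y‖ := by gcongr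
          _ = _ := one_mul _
      rw [h1] at h2
      have : ‖A y + A y‖ = 2 * ‖A y‖ := by
        rw [← two_smul ℝ (A y), norm_smul]; simp
      linarith
    have huc' := huc y (A y) hy hAy1
    have hkey : c * ‖y - A y‖ ^ q ≤ 1 - ‖A y‖ := by linarith
    have hdq : ‖y - A y‖ ^ q ≤ (1 - ‖A y‖) / c := by
      rw [le_div_iff₀ hc]; linarith
    have hr0 : (0:ℝ) ≤ 1 - ‖A y‖ := by linarith
    calc ‖y - A y‖ = (‖y - A y‖ ^ q) ^ (1/q) := by
          rw [← Real.rpow_mul (norm_nonneg _), mul_one_div, div_self hq0', Real.rpow_one]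
      _ ≤ ((1 - ‖A y‖) / c) ^ (1/q) := by
          apply Real.rpow_le_rpow (Real.rpow_nonneg (norm_nonneg _) _) hdq
          positivity
      _ = c ^ (-(1/q)) * (1 - ‖A y‖) ^ (1/q) := by
          rw [div_eq_mul_inv, Real.mul_rpow hr0 (inv_nonneg.mpr hc.le),
            Real.inv_rpow hc.le, ← Real.rpow_neg hc.le, mul_comm]
  -- main induction on the list of projections
  have key : ∀ L : List (X →L[ℂ] X), (∀ A ∈ L, A ∘L A = A) → (∀ A ∈ L, ‖A‖ ≤ 1) →
      ∀ x : X, ‖x‖ ≤ 1 →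
      ‖L.reverse.prod x‖ ≤ ‖x‖ ∧
      ‖x - L.reverse.prod x‖ ≤ (L.length : ℝ) * c ^ (-(1/q)) * (1 - ‖L.reverse.prod x‖) ^ (1/q) := by
    intro L
    induction L with
    | nil => intro _ _ x hx; simp
    | cons A L' ih =>
      intro hid hn x hx
      have happ : ∀ z : X, (A :: L').reverse.prod z = L'.reverse.prod (A z) := by
        intro z
        rw [List.reverse_cons, List.prod_append, List.prod_singleton,
          ContinuousLinearMap.mul_apply]
      have hAx : ‖A x‖ ≤ ‖x‖ := by
        calc ‖A x‖ ≤ ‖A‖ * ‖x‖ := A.le_opNorm x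
          _ ≤ 1 * ‖x‖ := by gcongr; exact hn A (by simp)
          _ = ‖x‖ := one_mul _
      have hAx1 : ‖A x‖ ≤ 1 := hAx.trans hx
      obtain ⟨ih1, ih2⟩ := ih (fun B hB => hid B (by simp [hB])) (fun B hB => hn B (by simp [hB]))
        (A x) hAx1
      have hTx : ‖(A :: L').reverse.prod x‖ ≤ ‖x‖ := by
        rw [happ]; exact le_trans ih1 hAx
      refine ⟨hTx, ?_⟩
      have hTle : ‖(A :: L').reverse.prod x‖ ≤ ‖A x‖ := by rw [happ]; exact ih1
      have hT1 : ‖(A :: L').reverse.prod x‖ ≤ 1 := hTx.trans hx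
      have hstep := step A (hid A (by simp)) (hn A (by simp)) x hx
      have hmono : (1 - ‖A x‖) ^ (1/q) ≤ (1 - ‖(A :: L').reverse.prod x‖) ^ (1/q) := by
        apply Real.rpow_le_rpow (by linarith) (by linarith) (by positivity)
      have h1 : ‖x - A x‖ ≤ c ^ (-(1/q)) * (1 - ‖(A :: L').reverse.prod x‖) ^ (1/q) := by
        calc ‖x - A x‖ ≤ c ^ (-(1/q)) * (1 - ‖A x‖) ^ (1/q) := hstep
          _ ≤ _ := by gcongr
      have h2 : ‖A x - (A :: L').reverse.prod x‖ ≤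
          (L'.length : ℝ) * c ^ (-(1/q)) * (1 - ‖(A :: L').reverse.prod x‖) ^ (1/q) := by
        rw [happ]; exact ih2
      calc ‖x - (A :: L').reverse.prod x‖
          ≤ ‖x - A x‖ + ‖A x - (A :: L').reverse.prod x‖ := by
            have := norm_sub_le_norm_sub_add_norm_sub x (A x) ((A :: L').reverse.prod x)
            exact this
        _ ≤ c ^ (-(1/q)) * (1 - ‖(A :: L').reverse.prod x‖) ^ (1/q)
            + (L'.length : ℝ) * c ^ (-(1/q)) * (1 - ‖(A :: L').reverse.prod x‖) ^ (1/q) :=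
            add_le_add h1 h2
        _ = ((A :: L').length : ℝ) * c ^ (-(1/q)) * (1 - ‖(A :: L').reverse.prod x‖) ^ (1/q) := by
            simp [List.length_cons]; push_cast; ring
  refine ⟨(N : ℝ) * c ^ (-(1/q)), by positivity, ?_⟩
  intro x hx
  have hkey := key (List.ofFn P) (by simpa using fun k => hidem k)
    (by simpa using fun k => hnorm k) x (le_of_eq hx)
  rw [← hT] at hkey
  obtain ⟨h1, h2⟩ := hkey
  rw [List.length_ofFn] at h2
  have hT1 : ‖T x‖ ≤ 1 := by rw [← hx]; exact h1
  have hexp : 1 / q ^ N ≤ 1 / q := by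
    apply one_div_le_one_div_of_le hq0
    exact le_self_pow₀ (by linarith) (by omega)
  have hexp0 : (0:ℝ) < 1 / q ^ N := by positivity
  have hrpow : (1 - ‖T x‖) ^ (1/q) ≤ (1 - ‖T x‖) ^ (1 / q ^ N) := by
    rcases eq_or_lt_of_le (by linarith : (0:ℝ) ≤ 1 - ‖T x‖) with h | h
    · rw [← h]
      rw [Real.zero_rpow (by positivity : (1:ℝ)/q ≠ 0)]
      rw [Real.zero_rpow (ne_of_gt hexp0)]
    · exact Real.rpow_le_rpow_of_exponent_ge h (by nlinarith [norm_nonneg (T x)]) hexp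
  calc ‖x - T x‖ ≤ (N : ℝ) * c ^ (-(1/q)) * (1 - ‖T x‖) ^ (1/q) := h2
    _ ≤ (N : ℝ) * c ^ (-(1/q)) * (1 - ‖T x‖) ^ (1 / q ^ N) := by gcongr
end

section
/- Let X be a q-uniformly convex Banach space (q ≥ 2) and T = P_N ⋯ P_1 a product of orthoprojections. Then the closed convex hull of the Banach-space numerical range of T is a generalised Stolz domain with parameter q^N; in particular every λ in the numerical range satisfies |λ| ≤ 1 and |λ - 1| ≤ C(1 - |λ|)^{1/q^N} for some constant C independent of λ. -/
/-!
For a contractive projection `A`, the midpoint of `u` and `A u` has norm at least `‖A u‖`,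
because `A (u + A u) = 2 • A u`; uniform convexity of power type `q` therefore gives
`c ‖u - A u‖ ^ q ≤ ‖u‖ - ‖A u‖`. Telescoping along `T = P_N ⋯ P_1` yields, for a unit
vector `x`, `‖x - T x‖ ≤ N ((1 - ‖T x‖) / c) ^ (1 / q)`. Since `φ_x x = 1` and `‖φ_x‖ = 1`,
the point `z = φ_x (T x)` satisfies `|z - 1| ≤ ‖x - T x‖` and `|z| ≤ ‖T x‖`, so the numerical
range lies in the set `(c / N ^ q) |z - 1| ^ q ≤ 1 - |z|`. This set is closed and convex
(`t ↦ t ^ q` is convex and increasing), hence contains the closed convex hull; near `1` the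
exponent `q` may be replaced by the larger `q ^ N`.
-/

open Set

theorem convexOn_norm_sub_rpow {E : Type*} [NormedAddCommGroup E] [NormedSpace ℝ E] (a : E)
    {p : ℝ} (hp : 1 ≤ p) : ConvexOn ℝ univ fun z : E => ‖z - a‖ ^ p := by
  refine ⟨convex_univ, fun x _ y _ s t hs ht hst => ?_⟩
  have hcombo : s • x + t • y - a = s • (x - a) + t • (y - a) := by
    rw [smul_sub, smul_sub, sub_add_sub_comm, Convex.combo_self hst]
  calc ‖s • x + t • y - a‖ ^ p ≤ (s * ‖x - a‖ + t * ‖y - a‖) ^ p := by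
        gcongr
        rw [hcombo, ← norm_smul_of_nonneg hs, ← norm_smul_of_nonneg ht]
        exact norm_add_le _ _
    _ ≤ s * ‖x - a‖ ^ p + t * ‖y - a‖ ^ p :=
        (convexOn_rpow hp).2 (norm_nonneg _) (norm_nonneg _) hs ht hst

def stolzDomain {𝕜 : Type*} [RCLike 𝕜] (c p : ℝ) : Set 𝕜 := {z | c * ‖z - 1‖ ^ p ≤ 1 - ‖z‖}

section StolzDomain

variable {𝕜 : Type*} [RCLike 𝕜] {c p : ℝ}

theorem convex_stolzDomain (hc : 0 ≤ c) (hp : 1 ≤ p) :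
    Convex ℝ (stolzDomain c p : Set 𝕜) := by
  have hconv := ((convexOn_norm_sub_rpow (1 : 𝕜) hp).smul hc).add convexOn_univ_norm
  have hset : (stolzDomain c p : Set 𝕜) =
      {z ∈ univ | c • ‖z - 1‖ ^ p + ‖z‖ ≤ 1} := by
    ext z
    simp only [stolzDomain, mem_ofPred_eq, mem_univ, true_and, smul_eq_mul]
    constructor <;> intro <;> linarith
  rw [hset]
  exact hconv.convex_le 1

theorem isClosed_stolzDomain (hp : 0 ≤ p) : IsClosed (stolzDomain c p : Set 𝕜) :=
  isClosed_le (continuous_const.mul ((continuous_id.sub continuous_const).norm.rpow_const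
    fun _ => Or.inr hp)) (continuous_const.sub continuous_norm)

theorem norm_le_one_of_mem_stolzDomain (hc : 0 ≤ c) {z : 𝕜} (hz : z ∈ stolzDomain c p) :
    ‖z‖ ≤ 1 := by
  have : 0 ≤ c * ‖z - 1‖ ^ p := by positivity
  linarith [hz.out]

theorem norm_sub_one_le_of_mem_stolzDomain (hc : 0 < c) (hp : 0 < p) {p' : ℝ}
    (hpp' : p ≤ p') {z : 𝕜} (hz : z ∈ stolzDomain c p) :
    ‖z - 1‖ ≤ (c ^ p⁻¹)⁻¹ * (1 - ‖z‖) ^ p'⁻¹ := by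
  have hz1 := norm_le_one_of_mem_stolzDomain hc.le hz
  have hroot : ‖z - 1‖ ≤ ((1 - ‖z‖) / c) ^ p⁻¹ := by
    rw [Real.le_rpow_inv_iff_of_pos (norm_nonneg _) (div_nonneg (by linarith) hc.le) hp,
      le_div_iff₀' hc]
    exact hz
  calc ‖z - 1‖ ≤ ((1 - ‖z‖) / c) ^ p⁻¹ := hroot
    _ = (c ^ p⁻¹)⁻¹ * (1 - ‖z‖) ^ p⁻¹ := by
      rw [Real.div_rpow (by linarith) hc.le, inv_mul_eq_div]
    _ ≤ (c ^ p⁻¹)⁻¹ * (1 - ‖z‖) ^ p'⁻¹ := by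
      refine mul_le_mul_of_nonneg_left ?_ (by positivity)
      exact Real.rpow_le_rpow_of_exponent_ge' (by linarith) (by linarith [norm_nonneg z])
        (inv_nonneg.2 (hp.trans_le hpp').le) (inv_anti₀ hp hpp')

theorem mem_stolzDomain_of_exponent_le {p' : ℝ} (hc : 0 ≤ c) (hp : 0 ≤ p) (hpp' : p ≤ p')
    {z : 𝕜} (hz1 : ‖z - 1‖ ≤ 1) (hz : z ∈ stolzDomain c p) : z ∈ stolzDomain c p' :=
  (mul_le_mul_of_nonneg_left (Real.rpow_le_rpow_of_exponent_ge' (norm_nonneg _) hz1 hp hpp')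
    hc).trans hz

end StolzDomain

theorem norm_list_prod_apply_le {𝕜 X : Type*} [RCLike 𝕜] [NormedAddCommGroup X]
    [NormedSpace 𝕜 X] (L : List (X →L[𝕜] X)) (hL : ∀ A ∈ L, ‖A‖ ≤ 1) (u : X) :
    ‖L.prod u‖ ≤ ‖u‖ := by
  induction L with
  | nil => simp
  | cons A L ih =>
    rw [List.prod_cons]
    exact (A.le_of_opNorm_le (hL A List.mem_cons_self) _).trans
      ((one_mul _).trans_le (ih fun B hB => hL B (List.mem_cons_of_mem A hB)))

def IsUniformlyConvexOfPowerType (c q : ℝ) (X : Type*) [NormedAddCommGroup X] : Prop :=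
  ∀ x y : X, ‖x‖ ≤ 1 → ‖y‖ ≤ 1 → c * ‖x - y‖ ^ q ≤ 1 - ‖x + y‖ / 2

namespace IsUniformlyConvexOfPowerType

variable {X : Type*} [NormedAddCommGroup X] {c q : ℝ}

theorem mul_norm_sub_rpow_le [NormedSpace ℝ X] (h : IsUniformlyConvexOfPowerType c q X)
    (hq : 1 ≤ q) {x y : X} (hx : ‖x‖ ≤ 1) (hyx : ‖y‖ ≤ ‖x‖) :
    c * ‖x - y‖ ^ q ≤ ‖x‖ - ‖x + y‖ / 2 := by
  obtain hr | hr := (norm_nonneg x).eq_or_lt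
  · obtain rfl : x = 0 := norm_eq_zero.mp hr.symm
    obtain rfl : y = 0 := norm_le_zero_iff.mp (hr ▸ hyx)
    simp [Real.zero_rpow (by linarith : q ≠ 0)]
  set r := ‖x‖
  have hscale : ∀ w : X, ‖r⁻¹ • w‖ = ‖w‖ / r := fun w => by
    rw [norm_smul, norm_inv, Real.norm_of_nonneg hr.le, inv_mul_eq_div]
  have hunit := h (r⁻¹ • x) (r⁻¹ • y) (by rw [hscale, div_self hr.ne'])
    (by rwa [hscale, div_le_one hr])
  rw [← smul_sub, ← smul_add, hscale, hscale, Real.div_rpow (norm_nonneg _) hr.le,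
    mul_div_assoc', div_le_iff₀ (by positivity)] at hunit
  have hsum : ‖x + y‖ ≤ 2 * r := by linarith [norm_add_le x y]
  calc c * ‖x - y‖ ^ q ≤ (1 - ‖x + y‖ / r / 2) * r ^ q := hunit
    _ ≤ (1 - ‖x + y‖ / r / 2) * r := by
      gcongr
      · rw [sub_nonneg, div_div, div_le_one (by positivity)]; linarith
      · exact Real.rpow_le_self_of_le_one hr.le hx hq
    _ = r - ‖x + y‖ / 2 := by field_simp

variable {𝕜 : Type*} [RCLike 𝕜] [NormedSpace 𝕜 X]

theorem norm_sub_apply_le (h : IsUniformlyConvexOfPowerType c q X) (hc : 0 < c) (hq : 1 ≤ q)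
    {A : X →L[𝕜] X} (hA : IsIdempotentElem A) (hA1 : ‖A‖ ≤ 1) {u : X} (hu : ‖u‖ ≤ 1) :
    ‖u - A u‖ ≤ ((‖u‖ - ‖A u‖) / c) ^ q⁻¹ := by
  let _ : NormedSpace ℝ X := NormedSpace.restrictScalars ℝ 𝕜 X
  have hcontr : ∀ w, ‖A w‖ ≤ ‖w‖ := fun w => by simpa using A.le_of_opNorm_le hA1 w
  have hmid : 2 * ‖A u‖ ≤ ‖u + A u‖ := by
    have hfix : A (A u) = A u := congr($hA u)
    calc 2 * ‖A u‖ = ‖A (u + A u)‖ := by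
          rw [map_add, hfix, ← two_smul ℝ, norm_smul, Real.norm_two]
      _ ≤ ‖u + A u‖ := hcontr _
  have key := h.mul_norm_sub_rpow_le hq hu (hcontr u)
  rw [Real.le_rpow_inv_iff_of_pos (norm_nonneg _) (div_nonneg (sub_nonneg.2 (hcontr u)) hc.le)
    (by linarith), le_div_iff₀' hc]
  linarith

theorem norm_sub_list_prod_apply_le (h : IsUniformlyConvexOfPowerType c q X) (hc : 0 < c)
    (hq : 1 ≤ q) (L : List (X →L[𝕜] X)) (hL : ∀ A ∈ L, IsIdempotentElem A ∧ ‖A‖ ≤ 1)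
    {u : X} (hu : ‖u‖ ≤ 1) :
    ‖u - L.prod u‖ ≤ L.length * ((‖u‖ - ‖L.prod u‖) / c) ^ q⁻¹ := by
  induction L with
  | nil => simp
  | cons A L ih =>
    obtain ⟨hA, hA1⟩ := hL A List.mem_cons_self
    have hL' : ∀ B ∈ L, IsIdempotentElem B ∧ ‖B‖ ≤ 1 := fun B hB =>
      hL B (List.mem_cons_of_mem A hB)
    set v := L.prod u
    have hvu : ‖v‖ ≤ ‖u‖ := norm_list_prod_apply_le L (fun B hB => (hL' B hB).2) u
    have hAv : ‖A v‖ ≤ ‖v‖ := by simpa using A.le_of_opNorm_le hA1 v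
    have hroot := h.norm_sub_apply_le hc hq hA hA1 (hvu.trans hu)
    have hsplit := norm_sub_le_norm_sub_add_norm_sub u v (A v)
    rw [List.prod_cons, List.length_cons, Nat.cast_succ]
    change ‖u - A v‖ ≤ _ * ((‖u‖ - ‖A v‖) / c) ^ q⁻¹
    calc ‖u - A v‖
        ≤ L.length * ((‖u‖ - ‖v‖) / c) ^ q⁻¹ + ((‖v‖ - ‖A v‖) / c) ^ q⁻¹ := by
          linarith [ih hL']
      _ ≤ L.length * ((‖u‖ - ‖A v‖) / c) ^ q⁻¹ + ((‖u‖ - ‖A v‖) / c) ^ q⁻¹ := by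
          gcongr
      _ = (L.length + 1) * ((‖u‖ - ‖A v‖) / c) ^ q⁻¹ := by ring

theorem apply_list_prod_mem_stolzDomain (h : IsUniformlyConvexOfPowerType c q X) (hc : 0 < c)
    (hq : 1 ≤ q) (L : List (X →L[𝕜] X)) (hL : ∀ A ∈ L, IsIdempotentElem A ∧ ‖A‖ ≤ 1) (hL0 : L ≠ [])
    {x : X} (hx : ‖x‖ = 1) (φ : StrongDual 𝕜 X) (hφ : ‖φ‖ ≤ 1) (hφx : φ x = 1) :
    φ (L.prod x) ∈ stolzDomain (c / L.length ^ q) q := by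
  set y := L.prod x
  have hφy : ‖φ y‖ ≤ ‖y‖ := by simpa using φ.le_of_opNorm_le hφ y
  have hφsub : ‖φ y - 1‖ ≤ ‖x - y‖ := by
    simpa [← hφx, norm_sub_rev] using φ.le_of_opNorm_le hφ (x - y)
  have hy := norm_list_prod_apply_le L (fun A hA => (hL A hA).2) x
  have hroot := h.norm_sub_list_prod_apply_le hc hq L hL hx.le
  rw [hx] at hy hroot
  have hlen : (0 : ℝ) < L.length := by simpa [Nat.pos_iff_ne_zero] using hL0
  have hdist : ‖φ y - 1‖ / L.length ≤ ((1 - ‖φ y‖) / c) ^ q⁻¹ := by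
    rw [div_le_iff₀' hlen]
    calc ‖φ y - 1‖ ≤ ‖x - y‖ := hφsub
      _ ≤ L.length * ((1 - ‖y‖) / c) ^ q⁻¹ := hroot
      _ ≤ L.length * ((1 - ‖φ y‖) / c) ^ q⁻¹ := by gcongr
  rw [Real.le_rpow_inv_iff_of_pos (by positivity) (div_nonneg (by linarith) hc.le)
    (by linarith), Real.div_rpow (norm_nonneg _) hlen.le,
    div_le_div_iff₀ (by positivity) hc] at hdist
  show c / L.length ^ q * ‖φ y - 1‖ ^ q ≤ 1 - ‖φ y‖
  rw [div_mul_eq_mul_div, div_le_iff₀ (by positivity)]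
  linarith

end IsUniformlyConvexOfPowerType

/-- In a `q`-uniformly convex Banach space, for a product `T = P_N ⋯ P_1` of orthoprojections,
the closed convex hull of the numerical range of `T` is a generalised Stolz domain with
parameter `q^N`; in particular every `λ` in the numerical range satisfies `|λ| ≤ 1` and
`|λ - 1| ≤ C(1 - |λ|)^{1/q^N}`. -/
theorem stmt12 {X : Type*} [NormedAddCommGroup X] [NormedSpace ℂ X]
    (q : ℝ) (hq : 2 ≤ q) (c : ℝ) (hc : 0 < c)
    -- `X` is `q`-uniformly convex: `δ_X(ε) ≥ cε^q`
    (huc : ∀ x y : X, ‖x‖ ≤ 1 → ‖y‖ ≤ 1 → c * ‖x - y‖ ^ q ≤ 1 - ‖x + y‖ / 2)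
    (N : ℕ) (hN : 1 ≤ N) (P : Fin N → (X →L[ℂ] X))
    (hidem : ∀ k, P k ∘L P k = P k) (hnorm : ∀ k, ‖P k‖ ≤ 1)
    (T : X →L[ℂ] X) (hT : T = (List.ofFn P).reverse.prod)
    -- an isometric duality selection `J : x ↦ φ_x` with `⟨x, φ_x⟩ = ‖x‖²`
    (J : X → StrongDual ℂ X)
    (hJ1 : ∀ x : X, ‖J x‖ = ‖x‖)
    (hJ2 : ∀ x : X, J x x = (‖x‖ : ℂ) ^ 2)
    -- the numerical range of `T` with respect to `J`
    (W : Set ℂ) (hW : W = {z : ℂ | ∃ x : X, ‖x‖ = 1 ∧ z = J x (T x)}) :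
    (∃ C > (0:ℝ), ∀ z ∈ W, ‖z‖ ≤ 1 ∧ ‖z - 1‖ ≤ C * (1 - ‖z‖) ^ (1 / q ^ N)) ∧
    (∃ c' > (0:ℝ), ∃ ε > (0:ℝ), ∀ z ∈ closure (convexHull ℝ W), ‖z - 1‖ ≤ ε →
      c' * ‖z - 1‖ ^ (q ^ N) ≤ 1 - ‖z‖) := by
  have huc : IsUniformlyConvexOfPowerType c q X := huc
  have hq1 : 1 ≤ q := by linarith
  have hqQ : q ≤ q ^ N := le_self_pow₀ hq1 (by omega)
  set L := (List.ofFn P).reverse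
  have hL : ∀ A ∈ L, IsIdempotentElem A ∧ ‖A‖ ≤ 1 := by
    simp only [L, List.mem_reverse, List.mem_ofFn]
    rintro _ ⟨k, rfl⟩
    exact ⟨hidem k, hnorm k⟩
  have hlen : L.length = N := by simp [L]
  have hL0 : L ≠ [] := by rw [← List.length_pos_iff]; omega
  set c₀ := c / (N : ℝ) ^ q
  have hc₀ : 0 < c₀ := by positivity
  have hWS : W ⊆ stolzDomain c₀ q := by
    rw [hW]
    rintro _ ⟨x, hx, rfl⟩
    have hφ : ‖J x‖ ≤ 1 := (hJ1 x).trans_le hx.le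
    have hφx : J x x = 1 := by rw [hJ2, hx]; simp
    simpa [hT, hlen] using huc.apply_list_prod_mem_stolzDomain hc hq1 L hL hL0 hx (J x) hφ hφx
  have hhull : closure (convexHull ℝ W) ⊆ stolzDomain c₀ q :=
    closure_minimal (convexHull_min hWS (convex_stolzDomain hc₀.le hq1))
      (isClosed_stolzDomain (by linarith))
  refine ⟨⟨(c₀ ^ q⁻¹)⁻¹, by positivity, fun z hz => ⟨?_, ?_⟩⟩, c₀, hc₀, 1, one_pos,
    fun z hz hz1 => mem_stolzDomain_of_exponent_le hc₀.le (by linarith) hqQ hz1 (hhull hz)⟩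
  · exact norm_le_one_of_mem_stolzDomain hc₀.le (hWS hz)
  · rw [one_div]
    exact norm_sub_one_le_of_mem_stolzDomain hc₀ (by linarith) hqQ (hWS hz)
end

section
/- Let X be a Banach space. The set of contractions Q ∈ B(X) for which there exists r ∈ (0,1) with ‖Q - rI‖ ≤ 1 - r is closed under composition: if ‖Q₁ - r₁I‖ ≤ 1 - r₁ and ‖Q₂ - r₂I‖ ≤ 1 - r₂ with r₁, r₂ ∈ (0,1), then there exists r ∈ (0,1) with ‖Q₂Q₁ - rI‖ ≤ 1 - r. -/
set_option maxHeartbeats 1000000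


/-- The set of contractions `Q` with `‖Q - rI‖ ≤ 1 - r` for some `r ∈ (0,1)` is closed under
composition. -/
theorem stmt14 {X : Type*} [NormedAddCommGroup X] [NormedSpace ℂ X]
    (Q₁ Q₂ : X →L[ℂ] X)
    (r₁ : ℝ) (hr₁ : r₁ ∈ Set.Ioo (0:ℝ) 1) (h₁ : ‖Q₁ - r₁ • (1 : X →L[ℂ] X)‖ ≤ 1 - r₁)
    (r₂ : ℝ) (hr₂ : r₂ ∈ Set.Ioo (0:ℝ) 1) (h₂ : ‖Q₂ - r₂ • (1 : X →L[ℂ] X)‖ ≤ 1 - r₂) :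
    ∃ r ∈ Set.Ioo (0:ℝ) 1, ‖Q₂ * Q₁ - r • (1 : X →L[ℂ] X)‖ ≤ 1 - r := by
  obtain ⟨h10, h11⟩ := hr₁
  obtain ⟨h20, h21⟩ := hr₂
  refine ⟨r₁ * r₂, ⟨mul_pos h10 h20, ?_⟩, ?_⟩
  · nlinarith
  · have key : Q₂ * Q₁ - (r₁ * r₂) • (1 : X →L[ℂ] X) =
        (Q₂ - r₂ • 1) * (Q₁ - r₁ • 1) + r₁ • (Q₂ - r₂ • 1) + r₂ • (Q₁ - r₁ • 1) := by
      rw [sub_mul, mul_sub, mul_sub]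
      simp only [smul_mul_assoc, mul_smul_comm, mul_one, one_mul, smul_smul, smul_sub]
      abel_nf
      rw [mul_comm r₂ r₁]
    rw [key]
    calc ‖(Q₂ - r₂ • 1) * (Q₁ - r₁ • 1) + r₁ • (Q₂ - r₂ • 1) + r₂ • (Q₁ - r₁ • 1)‖
        ≤ ‖(Q₂ - r₂ • 1) * (Q₁ - r₁ • 1)‖ + ‖r₁ • (Q₂ - r₂ • 1)‖ + ‖r₂ • (Q₁ - r₁ • 1)‖ :=
          norm_add₃_le
      _ ≤ (1 - r₂) * (1 - r₁) + r₁ * (1 - r₂) + r₂ * (1 - r₁) := by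
          gcongr
          · exact le_trans (norm_mul_le _ _) (by
              have := mul_le_mul h₂ h₁ (norm_nonneg _) (by linarith)
              linarith)
          · refine le_trans (ContinuousLinearMap.opNorm_smul_le _ _) ?_
            rw [Real.norm_of_nonneg h10.le]
            exact mul_le_mul_of_nonneg_left h₂ h10.le
          · refine le_trans (ContinuousLinearMap.opNorm_smul_le _ _) ?_
            rw [Real.norm_of_nonneg h20.le]
            exact mul_le_mul_of_nonneg_left h₁ h20.le
      _ ≤ 1 - r₁ * r₂ := by nlinarith
end

section
/- Let X be a Hilbert space, M₁, M₂ closed subspaces with orthogonal projections P₁, P₂, and let T = P₂P₁ + (I - P₂)(I - P₁) be the Douglas–Rachford operator. Then Fix T = (M₁ ∩ M₂) ⊕ (M₁^⊥ ∩ M₂^⊥). -/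
/-!
Since `x - T x = P₁ x + P₂ x - 2 P₂ P₁ x`, applying the idempotent `P₂` to `x - T x = 0` gives
`P₂ P₁ x = P₂ x`, and then `P₁ x = P₂ x`; the converse is immediate. So `Fix T` is the set where the
two projections agree, and `P₁ x = P₂ x` means exactly that `x` splits as `P₁ x ∈ M₁ ∩ M₂` plus
`x - P₁ x ∈ M₁^⊥ ∩ M₂^⊥`.
-/

theorem LinearMap.ker_one_sub_douglasRachford {R M : Type*} [Ring R] [AddCommGroup M] [Module R M]
    (P : Module.End R M) {Q : Module.End R M} (hQ : IsIdempotentElem Q) :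
    LinearMap.ker (1 - (Q * P + (1 - Q) * (1 - P))) = LinearMap.eqLocus P Q := by
  have hQx (x : M) : Q (Q x) = Q x := LinearMap.congr_fun hQ x
  ext x
  have residual : (1 - (Q * P + (1 - Q) * (1 - P))) x = P x + Q x - 2 • Q (P x) := by
    simp only [LinearMap.sub_apply, LinearMap.add_apply, Module.End.mul_apply, Module.End.one_apply,
      map_sub, two_smul]
    abel
  rw [LinearMap.mem_ker, LinearMap.mem_eqLocus, residual]
  constructor
  · intro h
    have hQP : Q (P x) = Q x := by
      have hQh := congrArg Q h
      rw [map_sub, map_add, map_nsmul, hQx, hQx, map_zero] at hQh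
      linear_combination (norm := module) -hQh
    rw [hQP] at h
    linear_combination (norm := module) h
  · intro h
    rw [h, hQx, two_smul, sub_self]

theorem Submodule.eqLocus_starProjection {𝕜 E : Type*} [RCLike 𝕜] [NormedAddCommGroup E]
    [InnerProductSpace 𝕜 E] (K L : Submodule 𝕜 E) [K.HasOrthogonalProjection]
    [L.HasOrthogonalProjection] :
    LinearMap.eqLocus (K.starProjection : E →ₗ[𝕜] E) L.starProjection = K ⊓ L ⊔ Kᗮ ⊓ Lᗮ := by
  ext x
  rw [LinearMap.mem_eqLocus, ContinuousLinearMap.coe_coe, ContinuousLinearMap.coe_coe]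
  constructor
  · intro h
    have hK : K.starProjection x ∈ K ⊓ L :=
      ⟨K.starProjection_apply_mem x, h ▸ L.starProjection_apply_mem x⟩
    have hPerp : x - K.starProjection x ∈ Kᗮ ⊓ Lᗮ :=
      ⟨K.sub_starProjection_mem_orthogonal x, h ▸ L.sub_starProjection_mem_orthogonal x⟩
    simpa using Submodule.add_mem_sup hK hPerp
  · intro hx
    obtain ⟨y, hy, z, hz, rfl⟩ := Submodule.mem_sup.1 hx
    rw [map_add, map_add, starProjection_eq_self_iff.2 hy.1, starProjection_eq_self_iff.2 hy.2,
      (starProjection_apply_eq_zero_iff _).2 hz.1,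
      (starProjection_apply_eq_zero_iff _).2 hz.2]

theorem stmt18_general {X : Type*} [NormedAddCommGroup X] [InnerProductSpace ℂ X]
    (M₁ M₂ : Submodule ℂ X) [CompleteSpace M₁] [CompleteSpace M₂]
    (P₁ P₂ T : X →L[ℂ] X)
    (hP₁ : P₁ = M₁.subtypeL ∘L M₁.orthogonalProjectionOnto)
    (hP₂ : P₂ = M₂.subtypeL ∘L M₂.orthogonalProjectionOnto)
    (hT : T = P₂ * P₁ + (1 - P₂) * (1 - P₁)) :
    LinearMap.ker ((1 - T : X →L[ℂ] X) : X →ₗ[ℂ] X) = (M₁ ⊓ M₂) ⊔ (M₁ᗮ ⊓ M₂ᗮ) ∧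
    Disjoint (M₁ ⊓ M₂) (M₁ᗮ ⊓ M₂ᗮ) := by
  obtain rfl : P₁ = M₁.starProjection := hP₁
  obtain rfl : P₂ = M₂.starProjection := hP₂
  subst hT
  refine ⟨?_, M₁.orthogonal_disjoint.mono inf_le_left inf_le_left⟩
  rw [← Submodule.eqLocus_starProjection]
  simpa only [ContinuousLinearMap.toLinearMap_sub, ContinuousLinearMap.toLinearMap_add,
    ContinuousLinearMap.toLinearMap_mul, ContinuousLinearMap.toLinearMap_one] using
    LinearMap.ker_one_sub_douglasRachford _
      (ContinuousLinearMap.isIdempotentElem_toLinearMap_iff.2 M₂.isIdempotentElem_starProjection)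

/-- For the Douglas–Rachford operator `T = P₂P₁ + (I - P₂)(I - P₁)` associated with closed
subspaces `M₁, M₂` of a Hilbert space, `Fix T = (M₁ ∩ M₂) ⊕ (M₁^⊥ ∩ M₂^⊥)`. -/
theorem stmt18 {X : Type*} [NormedAddCommGroup X] [InnerProductSpace ℂ X] [CompleteSpace X]
    (M₁ M₂ : Submodule ℂ X) [CompleteSpace M₁] [CompleteSpace M₂]
    (P₁ P₂ T : X →L[ℂ] X)
    (hP₁ : P₁ = M₁.subtypeL ∘L M₁.orthogonalProjectionOnto)
    (hP₂ : P₂ = M₂.subtypeL ∘L M₂.orthogonalProjectionOnto)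
    (hT : T = P₂ * P₁ + (1 - P₂) * (1 - P₁)) :
    LinearMap.ker ((1 - T : X →L[ℂ] X) : X →ₗ[ℂ] X) = (M₁ ⊓ M₂) ⊔ (M₁ᗮ ⊓ M₂ᗮ) ∧
    Disjoint (M₁ ⊓ M₂) (M₁ᗮ ⊓ M₂ᗮ) :=
  stmt18_general M₁ M₂ P₁ P₂ T hP₁ hP₂ hT
end
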